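/- arXiv:2311.03708 — 2 statements merged into one kernel-verified Lean document; each statement's English description precedes it below -/
import Mathlib

section
/- Let Q be a finitely generated residually finite quandle. Then the endomorphism monoid End(Q) is a residually finite monoid (for any two distinct quandle endomorphisms f, g of Q there exist a finite monoid M and a monoid homomorphism Φ : End(Q) → M with Φ(f) ≠ Φ(g)), and the automorphism group Aut(Q) is a residually finite group (for any two distinct quandle automorphisms f, g of Q there exist a finite group G and a group homomorphism Φ : Aut(Q) → G with Φ(f) ≠ Φ(g)). -/
open Quandles

/-- A quandle homomorphism: a map preserving the quandle operation. -/
def IsQdlHom {A B : Type} [Shelf A] [Shelf B] (f : A → B) : Prop :=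
  ∀ a b : A, f (a ◃ b) = f a ◃ f b

/-- A congruence on a quandle: an equivalence relation compatible with `◃` and `◃⁻¹`. -/
def IsQdlCong {Q : Type} [Quandle Q] (α : Setoid Q) : Prop :=
  ∀ a b c d : Q, α.r a b → α.r c d →
    α.r (a ◃ c) (b ◃ d) ∧ α.r (a ◃⁻¹ c) (b ◃⁻¹ d)

/-- A fully invariant congruence: invariant under all quandle endomorphisms. -/
def IsFullyInvariant {Q : Type} [Quandle Q] (α : Setoid Q) : Prop :=
  ∀ f : Q → Q, IsQdlHom f → ∀ a b : Q, α.r a b → α.r (f a) (f b)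

/-- A residually finite quandle. -/
def QdlResiduallyFinite (Q : Type) [Quandle Q] : Prop :=
  ∀ a b : Q, a ≠ b → ∃ (F : Type) (_ : Quandle F) (_ : Finite F) (f : Q → F),
    IsQdlHom f ∧ f a ≠ f b

/-- A quandle is generated by `X` if the only subset containing `X` that is closed under
`◃` and `◃⁻¹` is the whole quandle. -/
def QdlGeneratedBy (Q : Type) [Quandle Q] (X : Set Q) : Prop :=
  ∀ S : Set Q, X ⊆ S → (∀ a ∈ S, ∀ b ∈ S, a ◃ b ∈ S ∧ a ◃⁻¹ b ∈ S) → S = Set.univ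

/-- The endomorphism monoid of a quandle: quandle endomorphisms under composition. -/
def QdlEnd (Q : Type) [Quandle Q] : Type := {f : Q → Q // IsQdlHom f}

instance (Q : Type) [Quandle Q] : Monoid (QdlEnd Q) where
  mul f g := ⟨f.1 ∘ g.1, fun a b => by
    show f.1 (g.1 (a ◃ b)) = f.1 (g.1 a) ◃ f.1 (g.1 b)
    rw [g.2 a b]; exact f.2 _ _⟩
  one := ⟨id, fun _ _ => rfl⟩
  mul_assoc f g h := rfl
  one_mul f := rfl
  mul_one f := rfl

private lemma symm_isQdlHom {Q : Type} [Quandle Q] (f : Q ≃ Q) (hf : IsQdlHom (⇑f)) :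
    IsQdlHom (⇑f.symm) := fun a b => by
  apply f.injective
  rw [hf (f.symm a) (f.symm b), f.apply_symm_apply, f.apply_symm_apply, f.apply_symm_apply]

/-- The automorphism group of a quandle: bijective quandle endomorphisms under composition. -/
def QdlAut (Q : Type) [Quandle Q] : Type := {f : Q ≃ Q // IsQdlHom (⇑f)}

instance (Q : Type) [Quandle Q] : Group (QdlAut Q) where
  mul f g := ⟨g.1.trans f.1, fun a b => by
    show f.1 (g.1 (a ◃ b)) = f.1 (g.1 a) ◃ f.1 (g.1 b)
    rw [g.2 a b]; exact f.2 _ _⟩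
  one := ⟨Equiv.refl Q, fun _ _ => rfl⟩
  inv f := ⟨f.1.symm, symm_isQdlHom f.1 f.2⟩
  mul_assoc f g h := Subtype.ext (Equiv.ext fun _ => rfl)
  one_mul f := Subtype.ext (Equiv.ext fun _ => rfl)
  mul_one f := Subtype.ext (Equiv.ext fun _ => rfl)
  inv_mul_cancel f := Subtype.ext (Equiv.ext fun x => f.1.symm_apply_apply x)

private lemma hom_invAct {A B : Type} [Quandle A] [Quandle B] {f : A → B}
    (hf : IsQdlHom f) (a b : A) : f (a ◃⁻¹ b) = f a ◃⁻¹ f b := by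
  apply (Rack.act' (f a)).injective
  show f a ◃ f (a ◃⁻¹ b) = f a ◃ (f a ◃⁻¹ f b)
  rw [← hf, Rack.act_invAct_eq, Rack.act_invAct_eq]

private def homSetoid (Q F : Type) [Quandle Q] [Quandle F] : Setoid Q where
  r a b := ∀ φ : {f : Q → F // IsQdlHom f}, φ.1 a = φ.1 b
  iseqv := ⟨fun _ _ => rfl, fun h φ => (h φ).symm, fun h1 h2 φ => (h1 φ).trans (h2 φ)⟩

private lemma finite_homs {Q F : Type} [Quandle Q] [Quandle F] [Finite F]
    {X : Set Q} (hXfin : X.Finite) (hXgen : QdlGeneratedBy Q X) :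
    Finite {f : Q → F // IsQdlHom f} := by
  have : Finite X := hXfin
  refine Finite.of_injective (fun φ => (fun x : X => φ.1 x)) ?_
  intro φ ψ h
  have key : {q : Q | φ.1 q = ψ.1 q} = Set.univ := by
    apply hXgen
    · intro x hx; exact congrFun h ⟨x, hx⟩
    · intro a ha b hb
      refine ⟨?_, ?_⟩
      · show φ.1 (a ◃ b) = ψ.1 (a ◃ b)
        rw [φ.2, ψ.2, ha, hb]
      · show φ.1 (a ◃⁻¹ b) = ψ.1 (a ◃⁻¹ b)
        rw [hom_invAct φ.2, hom_invAct ψ.2, ha, hb]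
  exact Subtype.ext (funext fun q => (Set.eq_univ_iff_forall.mp key q))

private lemma finite_quot {Q F : Type} [Quandle Q] [Quandle F] [Finite F]
    {X : Set Q} (hXfin : X.Finite) (hXgen : QdlGeneratedBy Q X) :
    Finite (Quotient (homSetoid Q F)) := by
  have := finite_homs (F := F) hXfin hXgen
  refine Finite.of_injective
    (fun q => Quotient.lift (fun a => (fun φ : {f : Q → F // IsQdlHom f} => φ.1 a))
      (fun a b (h : (homSetoid Q F).r a b) => funext fun φ => h φ) q) ?_
  intro x y
  induction x using Quotient.ind
  induction y using Quotient.ind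
  intro h
  exact Quotient.sound fun φ => congrFun h φ

private def endHom (Q F : Type) [Quandle Q] [Quandle F] :
    QdlEnd Q →* Function.End (Quotient (homSetoid Q F)) where
  toFun h := Quotient.map h.1 (fun a b hab φ =>
    hab ⟨φ.1 ∘ h.1, fun x y => by
      show φ.1 (h.1 (x ◃ y)) = φ.1 (h.1 x) ◃ φ.1 (h.1 y)
      rw [h.2, φ.2]⟩)
  map_one' := funext fun q => by
    induction q using Quotient.ind; rfl
  map_mul' f g := funext fun q => by
    induction q using Quotient.ind; rfl

private def autToEnd (Q : Type) [Quandle Q] : QdlAut Q →* QdlEnd Q where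
  toFun f := ⟨⇑f.1, f.2⟩
  map_one' := rfl
  map_mul' f g := rfl

/-- For a finitely generated residually finite quandle, the endomorphism monoid is a
residually finite monoid and the automorphism group is a residually finite group. -/
theorem stmt_5 {Q : Type} [Quandle Q]
    (hfg : ∃ X : Set Q, X.Finite ∧ QdlGeneratedBy Q X)
    (hrf : QdlResiduallyFinite Q) :
    (∀ f g : QdlEnd Q, f ≠ g →
      ∃ (M : Type) (_ : Monoid M) (_ : Finite M) (Φ : QdlEnd Q →* M), Φ f ≠ Φ g) ∧
    (∀ f g : QdlAut Q, f ≠ g →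
      ∃ (G : Type) (_ : Group G) (_ : Finite G) (Φ : QdlAut Q →* G), Φ f ≠ Φ g) := by
  obtain ⟨X, hXfin, hXgen⟩ := hfg
  have key : ∀ f g : QdlEnd Q, f ≠ g →
      ∃ (F : Type) (_ : Quandle F) (_ : Finite F),
        Finite (Quotient (homSetoid Q F)) ∧ endHom Q F f ≠ endHom Q F g := by
    intro f g hfg'
    have : ∃ a : Q, f.1 a ≠ g.1 a := by
      by_contra h
      push_neg at h
      exact hfg' (Subtype.ext (funext h))
    obtain ⟨a, ha⟩ := this
    obtain ⟨F, instF, finF, π, hπ, hπne⟩ := hrf _ _ ha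
    refine ⟨F, instF, finF, finite_quot hXfin hXgen, ?_⟩
    intro h
    have := congrFun h (Quotient.mk (homSetoid Q F) a)
    have h2 : (homSetoid Q F).r (f.1 a) (g.1 a) := Quotient.exact this
    exact hπne (h2 ⟨π, hπ⟩)
  constructor
  · intro f g hne
    obtain ⟨F, instF, finF, finQuot, hΦ⟩ := key f g hne
    exact ⟨Function.End (Quotient (homSetoid Q F)), inferInstance,
      inferInstanceAs (Finite (Quotient (homSetoid Q F) → Quotient (homSetoid Q F))),
      endHom Q F, hΦ⟩
  · intro f g hne
    have hne' : autToEnd Q f ≠ autToEnd Q g := by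
      intro h
      apply hne
      exact Subtype.ext (Equiv.ext fun x => congrFun (congrArg Subtype.val h) x)
    obtain ⟨F, instF, finF, finQuot, hΦ⟩ := key _ _ hne'
    haveI : Finite (Function.End (Quotient (homSetoid Q F))) :=
      inferInstanceAs (Finite (Quotient (homSetoid Q F) → Quotient (homSetoid Q F)))
    refine ⟨(Function.End (Quotient (homSetoid Q F)))ˣ, inferInstance, inferInstance,
      ((endHom Q F).comp (autToEnd Q)).toHomUnits, ?_⟩
    intro h
    apply hΦ
    have := congrArg Units.val h
    simpa using this
end

section
/- Let Q be a compact Hausdorff topological quandle such that every neighborhood of the diagonal in Q × Q contains an open congruence (i.e., the open congruences form a fundamental system of entourages for the unique uniformity compatible with the topology of Q). Then the set End(Q) of continuous quandle endomorphisms of Q is compact in the compact-open topology on C(Q,Q) if and only if every open congruence on Q contains an open congruence that is fully invariant under all continuous endomorphisms. -/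
open Quandles

/-- A topological quandle: the quandle operation is (jointly) continuous and the
action of each element is a homeomorphism (i.e. its inverse `y ◃⁻¹ ·` is continuous). -/
structure IsTopQuandle (Q : Type) [Quandle Q] [TopologicalSpace Q] : Prop where
  continuous_act : Continuous fun p : Q × Q => p.1 ◃ p.2
  continuous_invAct : ∀ y : Q, Continuous fun x : Q => y ◃⁻¹ x

open Set Filter Topology Uniformity

/-- A quandle homomorphism automatically preserves the inverse operation. -/
lemma isQdlHom_invAct {Q : Type} [Quandle Q] {f : Q → Q} (hf : IsQdlHom f) (a b : Q) :
    f (a ◃⁻¹ b) = f a ◃⁻¹ f b := by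
  have h1 : a ◃ (a ◃⁻¹ b) = b := Rack.right_inv a b
  have h2 : f a ◃ f (a ◃⁻¹ b) = f b := by
    rw [← hf a (a ◃⁻¹ b), h1]
  have h4 := Rack.left_inv (f a) (f (a ◃⁻¹ b))
  rw [h2] at h4
  exact h4.symm

/-- The graph of an open congruence on any topological space is also closed. -/
lemma cong_rel_isClosed {Q : Type} [TopologicalSpace Q] {α : Setoid Q}
    (hop : IsOpen {p : Q × Q | α.r p.1 p.2}) : IsClosed {p : Q × Q | α.r p.1 p.2} := by
  rw [← isOpen_compl_iff, isOpen_iff_forall_mem_open]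
  rintro ⟨a, b⟩ hab
  refine ⟨{x : Q | α.r x a} ×ˢ {y : Q | α.r y b}, ?_, ?_, ?_⟩
  · rintro ⟨x, y⟩ ⟨hx, hy⟩ hxy
    exact hab (α.trans (α.trans (α.symm hx) hxy) hy)
  · have ha : Continuous fun x : Q => ((x, a) : Q × Q) :=
      continuous_id.prodMk continuous_const
    have hb : Continuous fun y : Q => ((y, b) : Q × Q) :=
      continuous_id.prodMk continuous_const
    exact IsOpen.prod (hop.preimage ha) (hop.preimage hb)
  · exact ⟨α.refl a, α.refl b⟩

/-- Let `Q` be a compact Hausdorff topological quandle in which the open congruences form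
a fundamental system of entourages (every neighborhood of the diagonal contains an open
congruence). Then the monoid of continuous endomorphisms of `Q` is compact in the
compact-open topology iff every open congruence contains an open congruence fully
invariant under all continuous endomorphisms. -/
theorem stmt_19 {Q : Type} [Quandle Q] [TopologicalSpace Q] [CompactSpace Q] [T2Space Q]
    (htq : IsTopQuandle Q)
    (hfund : ∀ U ∈ nhdsSet (Set.diagonal Q),
      ∃ α : Setoid Q, IsQdlCong α ∧ IsOpen {p : Q × Q | α.r p.1 p.2} ∧
        {p : Q × Q | α.r p.1 p.2} ⊆ U) :
    IsCompact {f : C(Q, Q) | ∀ a b : Q, f (a ◃ b) = f a ◃ f b} ↔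
      (∀ α : Setoid Q, IsQdlCong α → IsOpen {p : Q × Q | α.r p.1 p.2} →
        ∃ ρ : Setoid Q, IsQdlCong ρ ∧ IsOpen {p : Q × Q | ρ.r p.1 p.2} ∧
          (∀ f : Q → Q, IsQdlHom f → Continuous f →
            ∀ a b : Q, ρ.r a b → ρ.r (f a) (f b)) ∧
          (∀ a b : Q, ρ.r a b → α.r a b)) := by
  classical
  set S : Set C(Q, Q) := {f | ∀ a b : Q, f (a ◃ b) = f a ◃ f b} with hSdef
  constructor
  · -- Forward direction: compactness implies existence of fully invariant refinements.
    intro hcomp α hα hαop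
    set r : Q → Q → Prop := fun a b =>
      ∀ f : C(Q, Q), f ∈ S → α.r (f a) (f b) with hrdef
    have requiv : Equivalence r :=
      ⟨fun a f _ => α.refl (f a), fun h f hf => α.symm (h f hf),
        fun h1 h2 f hf => α.trans (h1 f hf) (h2 f hf)⟩
    refine ⟨⟨r, requiv⟩, ?_, ?_, ?_, ?_⟩
    · -- congruence
      intro a b c d hab hcd
      constructor
      · intro f hf
        have := (hα _ _ _ _ (hab f hf) (hcd f hf)).1
        show α.r (f (a ◃ c)) (f (b ◃ d))
        rw [hf a c, hf b d]; exact this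
      · intro f hf
        have := (hα _ _ _ _ (hab f hf) (hcd f hf)).2
        show α.r (f (a ◃⁻¹ c)) (f (b ◃⁻¹ d))
        rw [isQdlHom_invAct hf a c, isQdlHom_invAct hf b d]; exact this
    · -- openness, via the generalized tube lemma
      have hev : Continuous fun q : C(Q, Q) × (Q × Q) => ((q.1 q.2.1, q.1 q.2.2) : Q × Q) := by
        exact Continuous.prodMk
          (continuous_eval.comp (continuous_fst.prodMk continuous_snd.fst))
          (continuous_eval.comp (continuous_fst.prodMk continuous_snd.snd))
      rw [isOpen_iff_forall_mem_open]
      rintro ⟨a, b⟩ hab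
      have hn : IsOpen ((fun q : C(Q, Q) × (Q × Q) => ((q.1 q.2.1, q.1 q.2.2) : Q × Q)) ⁻¹'
          {p : Q × Q | α.r p.1 p.2}) := hαop.preimage hev
      have hp : S ×ˢ ({((a, b) : Q × Q)} : Set (Q × Q)) ⊆
          (fun q : C(Q, Q) × (Q × Q) => ((q.1 q.2.1, q.1 q.2.2) : Q × Q)) ⁻¹'
          {p : Q × Q | α.r p.1 p.2} := by
        rintro ⟨f, p⟩ ⟨hf, hpm⟩
        rcases hpm with rfl
        exact hab f hf
      obtain ⟨u, v, _, hvo, hSu, htv, huv⟩ :=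
        generalized_tube_lemma hcomp isCompact_singleton hn hp
      refine ⟨v, ?_, hvo, htv rfl⟩
      intro p hp f hf
      exact huv (show (f, p) ∈ u ×ˢ v from ⟨hSu hf, hp⟩)
    · -- full invariance under continuous endomorphisms
      intro g hg hgc a b hab f hf
      have hFS : (⟨fun x => f (g x), f.continuous.comp hgc⟩ : C(Q, Q)) ∈ S := by
        intro x y
        show f (g (x ◃ y)) = f (g x) ◃ f (g y)
        rw [hg x y, hf (g x) (g y)]
      exact hab ⟨fun x => f (g x), f.continuous.comp hgc⟩ hFS
    · -- contained in α
      intro a b hab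
      exact hab (ContinuousMap.id Q) (fun _ _ => rfl)
  · -- Backward direction: apply Arzelà–Ascoli.
    intro h
    letI uQ : UniformSpace Q := uniformSpaceOfCompactR1
    have hU : 𝓤 Q = nhdsSet (Set.diagonal Q) := rfl
    have hent : ∀ ρ : Setoid Q, IsOpen {p : Q × Q | ρ.r p.1 p.2} →
        {p : Q × Q | ρ.r p.1 p.2} ∈ 𝓤 Q := by
      intro ρ hop
      rw [hU, hop.mem_nhdsSet]
      rintro ⟨x, y⟩ (rfl : x = y)
      exact ρ.refl x
    have key : ∀ U ∈ 𝓤 Q, ∃ ρ : Setoid Q, IsQdlCong ρ ∧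
        IsOpen {p : Q × Q | ρ.r p.1 p.2} ∧
        (∀ f : Q → Q, IsQdlHom f → Continuous f → ∀ a b : Q, ρ.r a b → ρ.r (f a) (f b)) ∧
        {p : Q × Q | ρ.r p.1 p.2} ⊆ U := by
      intro U hUm
      rw [hU] at hUm
      obtain ⟨α, hαc, hαo, hαs⟩ := hfund U hUm
      obtain ⟨ρ, h1, h2, h3, h4⟩ := h α hαc hαo
      exact ⟨ρ, h1, h2, h3, fun p hp => hαs (h4 p.1 p.2 hp)⟩
    -- The set of "uniformly nice" plain functions
    set T : Set (Q → Q) := {g | (∀ a b : Q, g (a ◃ b) = g a ◃ g b) ∧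
      ∀ ρ : Setoid Q, IsQdlCong ρ → IsOpen {p : Q × Q | ρ.r p.1 p.2} →
        (∀ f : Q → Q, IsQdlHom f → Continuous f → ∀ a b : Q, ρ.r a b → ρ.r (f a) (f b)) →
        ∀ a b : Q, ρ.r a b → ρ.r (g a) (g b)} with hTdef
    have hTclosed : IsClosed T := by
      have hrw : T = (⋂ (a : Q), ⋂ (b : Q), {g : Q → Q | g (a ◃ b) = g a ◃ g b}) ∩
          ⋂ (ρ : Setoid Q), ⋂ (_ : IsQdlCong ρ), ⋂ (hop : IsOpen {p : Q × Q | ρ.r p.1 p.2}),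
          ⋂ (_ : ∀ f : Q → Q, IsQdlHom f → Continuous f →
            ∀ a b : Q, ρ.r a b → ρ.r (f a) (f b)),
          ⋂ (a : Q), ⋂ (b : Q), ⋂ (_ : ρ.r a b), {g : Q → Q | ρ.r (g a) (g b)} := by
        ext g
        simp only [hTdef, Set.mem_setOf_eq, Set.mem_inter_iff, Set.mem_iInter]
      rw [hrw]
      refine IsClosed.inter ?_ ?_
      · refine isClosed_iInter fun a => isClosed_iInter fun b => ?_
        have hc2 : Continuous fun g : Q → Q => ((g a, g b) : Q × Q) :=
          (continuous_apply a).prodMk (continuous_apply b)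
        have hc : Continuous fun g : Q → Q => g a ◃ g b := htq.continuous_act.comp hc2
        exact isClosed_eq (continuous_apply (a ◃ b)) hc
      · refine isClosed_iInter fun ρ => isClosed_iInter fun _ => isClosed_iInter fun hop =>
          isClosed_iInter fun _ => isClosed_iInter fun a => isClosed_iInter fun b =>
          isClosed_iInter fun _ => ?_
        have hc : Continuous fun g : Q → Q => ((g a, g b) : Q × Q) :=
          (continuous_apply a).prodMk (continuous_apply b)
        exact (cong_rel_isClosed hop).preimage hc
    have hTcompact : IsCompact T := hTclosed.isCompact
    have himg : ContinuousMap.toFun '' S = T := by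
      apply Set.Subset.antisymm
      · rintro g ⟨f, hf, rfl⟩
        exact ⟨hf, fun ρ _ _ hinv a b hab => hinv f hf f.continuous a b hab⟩
      · intro g hg
        have hug : UniformContinuous g := by
          rw [uniformContinuous_def]
          intro U hUm
          obtain ⟨ρ, h1, h2, h3, h4⟩ := key U hUm
          refine Filter.mem_of_superset (hent ρ h2) ?_
          intro p hp
          exact h4 (hg.2 ρ h1 h2 h3 p.1 p.2 hp)
        exact ⟨⟨g, hug.continuous⟩, hg.1, rfl⟩
    have heq : Equicontinuous ((↑) : S → Q → Q) := by
      intro x U hUm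
      obtain ⟨ρ, h1, h2, h3, h4⟩ := key U hUm
      have hball : {y : Q | ρ.r x y} ∈ 𝓝 x := by
        have hc : Continuous fun y : Q => ((x, y) : Q × Q) :=
          continuous_const.prodMk continuous_id
        have hop : IsOpen {y : Q | ρ.r x y} := h2.preimage hc
        exact hop.mem_nhds (ρ.refl x)
      filter_upwards [hball] with y hy i
      exact h4 (h3 (i : C(Q, Q)) i.2 (i : C(Q, Q)).continuous x y hy)
    have hS1 : IsCompact (ContinuousMap.toFun '' S) := by
      rw [himg]; exact hTcompact
    exact ArzelaAscoli.isCompact_of_equicontinuous S hS1 heq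
end
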